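/- In the game G₂: (i) every memoryless (positional) leader strategy profile gives the leader expected reward at most 1, and this bound is attained; (ii) there is a leader strategy profile with memory bound 3 (in which player 1 moves immediately to vertex 2 and the leader loops at vertex 2 exactly twice before moving to vertex 3) whose leader expected reward is 3/2; (iii) 3/2 is the maximum of the leader's expected reward over all leader strategy profiles of G₂. In particular, bounded-memory leader strategy profiles can be strictly better for the leader than memoryless ones. -/

import Mathlib

open scoped BigOperators

/-- A multi-player discounted sum game (MDSG) on sets of players `P`,
vertices `V` and actions `A`, all required to be finite (`A` nonempty).
The `owner` of a vertex chooses the action there; `tr` is the transition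
function, `rew p v a` is the reward of player `p` for taking action `a`
at vertex `v`, `init` is the initial probability distribution on the
vertices, and `disc` is the discount factor. -/
structure MDSG (P V A : Type) : Type where
  fin_P : Finite P
  fin_V : Finite V
  fin_A : Finite A
  nonempty_A : Nonempty A
  owner : V → P
  tr : V → A → V
  rew : P → V → A → ℝ
  init : V → ℝ
  init_nonneg : ∀ v, 0 ≤ init v
  init_sum : ∑' v, init v = 1
  disc : ℝ
  disc_pos : 0 < disc
  disc_lt_one : disc < 1

/-- A pure strategy profile: given the history (the list of vertex/action pairs
seen so far) and the current vertex, the owner of the current vertex chooses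
an action.  The strategy of an individual player `p` is the restriction of the
profile to the vertices owned by `p`. -/
abbrev Profile (V A : Type) : Type := List (V × A) → V → A

namespace MDSG

variable {P V A : Type}

/-- The pair (history, current vertex) after `n` steps of the play of `σ` from `v`. -/
def histState (G : MDSG P V A) (σ : Profile V A) (v : V) : ℕ → List (V × A) × V
  | 0 => ([], v)
  | n + 1 =>
    let s := G.histState σ v n
    (s.1 ++ [(s.2, σ s.1 s.2)], G.tr s.2 (σ s.1 s.2))

/-- The vertex visited at step `n` of the play of `σ` from `v`. -/
def playV (G : MDSG P V A) (σ : Profile V A) (v : V) (n : ℕ) : V :=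
  (G.histState σ v n).2

/-- The action taken at step `n` of the play of `σ` from `v`. -/
def playA (G : MDSG P V A) (σ : Profile V A) (v : V) (n : ℕ) : A :=
  σ (G.histState σ v n).1 (G.playV σ v n)

/-- The discounted reward of player `p` on the play of `σ` from `v`. -/
noncomputable def reward (G : MDSG P V A) (p : P) (σ : Profile V A) (v : V) : ℝ :=
  ∑' i : ℕ, G.rew p (G.playV σ v i) (G.playA σ v i) * G.disc ^ i

/-- The expected reward of player `p` under the strategy profile `σ`. -/
noncomputable def ER (G : MDSG P V A) (p : P) (σ : Profile V A) : ℝ :=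
  ∑' v : V, G.init v * G.reward p σ v

/-- `σ'` differs from `σ` at most in the strategy of player `p`. -/
def DiffOnly (G : MDSG P V A) (σ σ' : Profile V A) (p : P) : Prop :=
  ∀ h v, G.owner v ≠ p → σ' h v = σ h v

/-- Nash equilibrium: no player can profit from a unilateral deviation. -/
def IsNash (G : MDSG P V A) (σ : Profile V A) : Prop :=
  ∀ p σ', G.DiffOnly σ σ' p → G.ER p σ' ≤ G.ER p σ

/-- Leader strategy profile: no player other than the leader `l` can profit
from a unilateral deviation. -/
def IsLeaderSP (G : MDSG P V A) (l : P) (σ : Profile V A) : Prop :=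
  ∀ p, p ≠ l → ∀ σ', G.DiffOnly σ σ' p → G.ER p σ' ≤ G.ER p σ

/-- `σ` is a (pure) strategy profile with memory bound `b`: there is a memory
set `M` with `|M| ≤ b`, an initial memory state, a memory update function and
a usage function producing all the actions of `σ`. -/
def MemBound (G : MDSG P V A) (σ : Profile V A) (b : ℕ) : Prop :=
  ∃ n : ℕ, n ≤ b ∧ ∃ (m₀ : Fin n) (μ : Fin n → V × A → Fin n) (u : Fin n → V → A),
    ∀ h v, σ h v = u (h.foldl μ m₀) v

/-- `σ` is memoryless (positional): actions depend only on the current vertex. -/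
def Positional (G : MDSG P V A) (σ : Profile V A) : Prop :=
  ∀ h h' v, σ h v = σ h' v

open Classical in
/-- Combination of a strategy for player `p` with a joint strategy of the other players. -/
noncomputable def combine (G : MDSG P V A) (p : P) (τp τo : Profile V A) : Profile V A :=
  fun h v => if G.owner v = p then τp h v else τo h v

/-- The lower value of player `p` at vertex `v`: the supremum over the pure
strategies of `p` of the infimum over the joint pure strategies of the other
players of the reward of `p` on the resulting play from `v`. -/
noncomputable def lowerValue (G : MDSG P V A) (p : P) (v : V) : ℝ :=
  ⨆ τp : Profile V A, ⨅ τo : Profile V A, G.reward p (G.combine p τp τo) v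

/-- The upper value of player `p` at vertex `v`. -/
noncomputable def upperValue (G : MDSG P V A) (p : P) (v : V) : ℝ :=
  ⨅ τo : Profile V A, ⨆ τp : Profile V A, G.reward p (G.combine p τp τo) v

/-- The history `h` contains a deviation from `σ` at position `i`. -/
def DeviatesAt (G : MDSG P V A) (σ : Profile V A) (h : List (V × A)) (i : ℕ) : Prop :=
  ∃ hi : i < h.length, (h.get ⟨i, hi⟩).2 ≠ σ (h.take i) (h.get ⟨i, hi⟩).1

/-- Reward-and-punish profile: on every history that deviates from the
prescribed actions, every action depends only on the current vertex and on the
identity of the first player who deviated (all players follow a fixed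
positional strategy depending only on the first deviator). -/
def IsRewardPunish (G : MDSG P V A) (σ : Profile V A) : Prop :=
  ∃ punish : P → V → A, ∀ (h : List (V × A)) (i : ℕ) (hi : i < h.length),
    G.DeviatesAt σ h i → (∀ j, j < i → ¬ G.DeviatesAt σ h j) →
    ∀ v, σ h v = punish (G.owner (h.get ⟨i, hi⟩).1) v

/-- The outcome plays of `σ` are generated with compliance memory bound `b`:
on every history on which all players have complied, the actions of `σ` are
produced by a memory structure with at most `b` states. -/
def ComplianceMemBound (G : MDSG P V A) (σ : Profile V A) (b : ℕ) : Prop :=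
  ∃ n : ℕ, n ≤ b ∧ ∃ (m₀ : Fin n) (μ : Fin n → V × A → Fin n) (u : Fin n → V → A),
    ∀ h : List (V × A), (∀ i, ¬ G.DeviatesAt σ h i) →
      ∀ v, σ h v = u (h.foldl μ m₀) v

/-- The set of stationary mixed decision vectors: an assignment of a
probability distribution over the actions to every vertex. -/
def simplexD (V A : Type) : Set (V → A → ℝ) :=
  {d | ∀ v, (∀ a, 0 ≤ d v a) ∧ ∑' a, d v a = 1}

end MDSG
namespace MDSG

/-- The game `G₂` (Figure 3 of the paper): three players `0, 1, 2`
(representing players 1, 2, 3, where player `1` — i.e. player 2 — is the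
leader), three vertices `0, 1, 2` (representing vertices 1, 2, 3, vertex `i`
owned by player `i`), actions `Bool` (`true` = "go", `false` = "stay").
Vertex `0`: "stay" loops at `0` with rewards `(0,0,0)`, "go" moves to `1`
with rewards `(0,0,0)`.  Vertex `1`: "stay" loops at `1` with rewards
`(1,1,-2)`, "go" moves to `2` with rewards `(-3,3,0)`.  Vertex `2`: both
actions loop at `2` with rewards `(-3,3,0)`.  The initial distribution is the
point mass at vertex `0`, and the discount factor is `1/2`. -/
noncomputable def G2 : MDSG (Fin 3) (Fin 3) Bool where
  fin_P := inferInstance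
  fin_V := inferInstance
  fin_A := inferInstance
  nonempty_A := inferInstance
  owner := fun v => v
  tr := fun v a =>
    if v = 0 then (if a then 1 else 0)
    else if v = 1 then (if a then 2 else 1)
    else 2
  rew := fun p v a =>
    if v = 0 then 0
    else if v = 1 then
      (if a then (if p = 0 then -3 else if p = 1 then 3 else 0)
       else (if p = 0 then 1 else if p = 1 then 1 else -2))
    else (if p = 0 then -3 else if p = 1 then 3 else 0)
  init := fun v => if v = 0 then 1 else 0
  init_nonneg := by intro v; (try dsimp only); split <;> norm_num
  init_sum := by simpa using tsum_ite_eq (0 : Fin 3) (1 : ℝ)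
  disc := 1 / 2
  disc_pos := by norm_num
  disc_lt_one := by norm_num

end MDSG

/-! In `G2` (0-based: the leader is player `1`, play starts at vertex `0`), the per-step rewards
satisfy `rew 1 + rew 0 / 2 = 3/2` away from vertex `0` and `0` at vertex `0`, so
`reward 1 + reward 0 / 2 ≤ 3/2 · ∑_{i ≥ 1} 2⁻ⁱ = 3/2`. Player `0` can secure `0` by never leaving
vertex `0`, hence `reward 0 ≥ 0` in every leader strategy profile and `reward 1 ≤ 3/2`.
If the leader stays twice at vertex `1` and then leaves, whenever player `0` enters vertex `1` he
collects `1/2 + 1/4 - 3/8 - 3/8 = 0` (up to the discount of the delay), so he has no profitable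
deviation, while the leader gets `1/2 + 1/4 + 3/8 + 3/8 = 3/2`. A positional leader either stays at
vertex `1` forever (leader reward `1`) or leaves it at once, and then player `0` would get `-3` by
entering, so the play never leaves vertex `0`. -/

open Finset

section DiscountedSeries

variable {c : ℕ → ℝ} {r e : ℝ}

theorem summable_mul_pow_of_tail_eq (hr₀ : 0 ≤ r) (hr₁ : r < 1) (n : ℕ)
    (hc : ∀ i, c (i + n) = e) : Summable fun i => c i * r ^ i := by
  refine (summable_nat_add_iff n).1 ?_
  simp_rw [hc, pow_add]
  exact ((summable_geometric_of_lt_one hr₀ hr₁).mul_right (r ^ n)).mul_left e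

theorem tsum_mul_pow_of_tail_eq (hr₀ : 0 ≤ r) (hr₁ : r < 1) (n : ℕ)
    (hc : ∀ i, c (i + n) = e) :
    ∑' i, c i * r ^ i = ∑ i ∈ range n, c i * r ^ i + r ^ n * e / (1 - r) := by
  rw [← (summable_mul_pow_of_tail_eq hr₀ hr₁ n hc).sum_add_tsum_nat_add n]
  simp_rw [hc, pow_add]
  rw [tsum_mul_left, tsum_mul_right, tsum_geometric_of_lt_one hr₀ hr₁, div_eq_mul_inv]
  ring

theorem tsum_mul_pow_of_eq_zero_of_lt (hs : Summable fun i => c i * r ^ i) (k : ℕ)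
    (hc : ∀ i < k, c i = 0) : ∑' i, c i * r ^ i = r ^ k * ∑' i, c (i + k) * r ^ i := by
  rw [← hs.sum_add_tsum_nat_add k,
    sum_eq_zero fun i hi => by rw [hc i (mem_range.1 hi), zero_mul], zero_add, ← tsum_mul_left]
  congr 1 with i
  ring

end DiscountedSeries

namespace MDSG

variable {P V A : Type} (G : MDSG P V A)

theorem playV_zero (σ : Profile V A) (v : V) : G.playV σ v 0 = v := rfl

theorem playV_succ (σ : Profile V A) (v : V) (n : ℕ) :
    G.playV σ v (n + 1) = G.tr (G.playV σ v n) (G.playA σ v n) := rfl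

theorem foldl_histState_succ {M : Type} (μ : M → V × A → M) (m₀ : M) (σ : Profile V A) (v : V)
    (n : ℕ) : (G.histState σ v (n + 1)).1.foldl μ m₀ =
      μ ((G.histState σ v n).1.foldl μ m₀) (G.playV σ v n, G.playA σ v n) :=
  List.foldl_append ..

theorem ER_eq_reward_of_init_eq [DecidableEq V] {v₀ : V}
    (h : ∀ v, G.init v = if v = v₀ then 1 else 0) (p : P) (σ : Profile V A) :
    G.ER p σ = G.reward p σ v₀ := by
  simp only [ER, h, ite_mul, one_mul, zero_mul, tsum_ite_eq]

theorem summable_play (f : V → A → ℝ) (σ : Profile V A) (v : V) :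
    Summable fun i => f (G.playV σ v i) (G.playA σ v i) * G.disc ^ i := by
  have := G.fin_V
  have := G.fin_A
  obtain ⟨C, hC⟩ := (Set.finite_range fun x : V × A => |f x.1 x.2|).bddAbove
  refine .of_norm_bounded
    ((summable_geometric_of_lt_one G.disc_pos.le G.disc_lt_one).mul_left C) fun i => ?_
  rw [norm_mul, norm_pow, Real.norm_of_nonneg G.disc_pos.le, Real.norm_eq_abs]
  exact mul_le_mul_of_nonneg_right (hC ⟨(_, _), rfl⟩) (pow_nonneg G.disc_pos.le _)

theorem tsum_play_le (f : V → A → ℝ) {M : ℝ} (hM : ∀ v a, f v a ≤ M) (σ : Profile V A) {v : V}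
    (hv : ∀ a, f v a ≤ 0) :
    ∑' i, f (G.playV σ v i) (G.playA σ v i) * G.disc ^ i ≤ M * G.disc / (1 - G.disc) := by
  have hd := G.disc_pos.le
  have htail : ∀ i, ((fun i : ℕ => if i = 0 then 0 else M) (i + 1)) = M := fun _ => rfl
  calc _ ≤ ∑' i, (if i = 0 then 0 else M) * G.disc ^ i := by
        refine (G.summable_play f σ v).tsum_le_tsum (fun i => ?_)
          (summable_mul_pow_of_tail_eq hd G.disc_lt_one 1 htail)
        rcases i with _ | i
        · simpa [playV_zero] using hv _
        · exact mul_le_mul_of_nonneg_right (hM _ _) (pow_nonneg hd _)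
    _ = M * G.disc / (1 - G.disc) := by
        rw [tsum_mul_pow_of_tail_eq hd G.disc_lt_one 1 htail]
        simp only [range_one, sum_singleton, if_pos, pow_one, zero_mul, zero_add]
        ring

end MDSG

namespace MDSG.G2

theorem disc_eq : G2.disc = 1 / 2 := rfl

theorem rew_zero (p : Fin 3) (a : Bool) : G2.rew p 0 a = 0 := rfl

theorem ER_eq_reward (p : Fin 3) (σ : Profile (Fin 3) Bool) : G2.ER p σ = G2.reward p σ 0 :=
  G2.ER_eq_reward_of_init_eq (fun _ => rfl) p σ

theorem reward_zero_le_one (σ : Profile (Fin 3) Bool) : G2.reward 0 σ 0 ≤ 1 := by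
  refine (G2.tsum_play_le _ (M := 1) (fun v a => ?_) σ fun a => (rew_zero 0 a).le).trans_eq ?_
  · fin_cases v <;> cases a <;> norm_num [G2]
  · norm_num [disc_eq]

theorem reward_one_add_half_reward_zero_le (σ : Profile (Fin 3) Bool) :
    G2.reward 1 σ 0 + G2.reward 0 σ 0 / 2 ≤ 3 / 2 := by
  have hsplit : G2.reward 1 σ 0 + G2.reward 0 σ 0 / 2 = ∑' i,
      (fun v a => G2.rew 1 v a + G2.rew 0 v a / 2) (G2.playV σ 0 i) (G2.playA σ 0 i) *
        G2.disc ^ i := by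
    rw [reward, reward, ← tsum_div_const,
      ← (G2.summable_play _ σ 0).tsum_add ((G2.summable_play _ σ 0).div_const 2)]
    congr 1 with i
    ring
  rw [hsplit]
  refine (G2.tsum_play_le (fun v a => G2.rew 1 v a + G2.rew 0 v a / 2) (M := 3 / 2)
    (fun v a => ?_) σ (v := 0) fun a => ?_).trans_eq ?_
  · fin_cases v <;> cases a <;> norm_num [G2]
  · norm_num [rew_zero]
  · norm_num [disc_eq]

theorem reward_eq_zero_of_playV_eq_zero {σ : Profile (Fin 3) Bool} (h : ∀ n, G2.playV σ 0 n = 0)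
    (p : Fin 3) : G2.reward p σ 0 = 0 := by
  simp only [reward, h, rew_zero, zero_mul, tsum_zero]

theorem playV_eq_zero_of_stay {σ : Profile (Fin 3) Bool} (h0 : ∀ h, σ h 0 = false) (n : ℕ) :
    G2.playV σ 0 n = 0 := by
  induction n with
  | zero => rfl
  | succ n ih => rw [playV_succ, playA, ih, h0]; rfl

theorem reward_zero_nonneg_of_isLeaderSP {σ : Profile (Fin 3) Bool} (hσ : G2.IsLeaderSP 1 σ) :
    0 ≤ G2.reward 0 σ 0 := by
  classical
  let stay : Profile (Fin 3) Bool := fun h v => if v = 0 then false else σ h v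
  have := hσ 0 (by decide) stay fun h v hv => if_neg hv
  rwa [ER_eq_reward, ER_eq_reward,
    reward_eq_zero_of_playV_eq_zero (playV_eq_zero_of_stay fun _ => if_pos rfl)] at this

theorem ER_one_le_of_isLeaderSP {σ : Profile (Fin 3) Bool} (hσ : G2.IsLeaderSP 1 σ) :
    G2.ER 1 σ ≤ 3 / 2 := by
  rw [ER_eq_reward]
  linarith [reward_one_add_half_reward_zero_le σ, reward_zero_nonneg_of_isLeaderSP hσ]

theorem playV_eq_two_of_le {σ : Profile (Fin 3) Bool} {m : ℕ} (hm : G2.playV σ 0 m = 2) {n : ℕ}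
    (hn : m ≤ n) : G2.playV σ 0 n = 2 := by
  induction n, hn using Nat.le_induction with
  | base => exact hm
  | succ n _ ih => rw [playV_succ, ih]; rfl

theorem playV_succ_of_go_stay {σ : Profile (Fin 3) Bool} (h0 : ∀ h, σ h 0 = true)
    (h1 : ∀ h, σ h 1 = false) (n : ℕ) : G2.playV σ 0 (n + 1) = 1 := by
  induction n with
  | zero => rw [playV_succ, playA, playV_zero, h0]; rfl
  | succ n ih => rw [playV_succ, playA, ih, h1]; rfl

theorem reward_of_go_stay {σ : Profile (Fin 3) Bool} (h0 : ∀ h, σ h 0 = true)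
    (h1 : ∀ h, σ h 1 = false) (p : Fin 3) : G2.reward p σ 0 = G2.rew p 1 false := by
  have htail : ∀ i, G2.rew p (G2.playV σ 0 (i + 1)) (G2.playA σ 0 (i + 1)) = G2.rew p 1 false :=
    fun i => by rw [playA, playV_succ_of_go_stay h0 h1, h1]
  rw [reward, tsum_mul_pow_of_tail_eq G2.disc_pos.le G2.disc_lt_one 1 htail]
  norm_num [playV_zero, rew_zero, disc_eq]

theorem reward_zero_of_go_go {σ : Profile (Fin 3) Bool} (h0 : ∀ h, σ h 0 = true)
    (h1 : ∀ h, σ h 1 = true) : G2.reward 0 σ 0 = -3 := by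
  have hv1 : G2.playV σ 0 1 = 1 := by rw [playV_succ, playA, playV_zero, h0]; rfl
  have ha1 : G2.playA σ 0 1 = true := by rw [playA, hv1, h1]
  have hv2 : G2.playV σ 0 2 = 2 := by rw [playV_succ, hv1, ha1]; rfl
  have htail : ∀ i, G2.rew 0 (G2.playV σ 0 (i + 1)) (G2.playA σ 0 (i + 1)) = -3
    | 0 => by rw [hv1, ha1]; rfl
    | i + 1 => by rw [playV_eq_two_of_le hv2 (by omega)]; cases G2.playA σ 0 (i + 2) <;> rfl
  rw [reward, tsum_mul_pow_of_tail_eq G2.disc_pos.le G2.disc_lt_one 1 htail]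
  norm_num [playV_zero, rew_zero, disc_eq]

theorem ER_one_le_one_of_positional {σ : Profile (Fin 3) Bool} (hpos : G2.Positional σ)
    (hσ : G2.IsLeaderSP 1 σ) : G2.ER 1 σ ≤ 1 := by
  have hv : ∀ v h, σ h v = σ [] v := fun v h => hpos h [] v
  rw [ER_eq_reward]
  cases h0 : σ [] 0
  · rw [reward_eq_zero_of_playV_eq_zero (playV_eq_zero_of_stay fun h => (hv 0 h).trans h0)]
    norm_num
  cases h1 : σ [] 1
  · rw [reward_of_go_stay (fun h => (hv 0 h).trans h0) (fun h => (hv 1 h).trans h1)]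
    norm_num [G2]
  · have := reward_zero_nonneg_of_isLeaderSP hσ
    rw [reward_zero_of_go_go (fun h => (hv 0 h).trans h0) (fun h => (hv 1 h).trans h1)] at this
    norm_num at this

theorem isLeaderSP_one_of {σ : Profile (Fin 3) Bool}
    (h0 : ∀ σ', G2.DiffOnly σ σ' 0 → G2.reward 0 σ' 0 ≤ G2.reward 0 σ 0)
    (h2 : ∀ σ', G2.DiffOnly σ σ' 2 → G2.reward 2 σ' 0 ≤ G2.reward 2 σ 0) :
    G2.IsLeaderSP 1 σ := by
  intro p hp σ' hσ'
  simp only [ER_eq_reward]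
  fin_cases p
  exacts [h0 σ' hσ', absurd rfl hp, h2 σ' hσ']

def goThenStay : Profile (Fin 3) Bool := fun _ v => decide (v = 0)

theorem isLeaderSP_goThenStay : G2.IsLeaderSP 1 goThenStay := by
  refine isLeaderSP_one_of (fun σ' _ => ?_) fun σ' hσ' => ?_
  · rw [reward_of_go_stay (σ := goThenStay) (fun _ => rfl) (fun _ => rfl)]
    exact reward_zero_le_one σ'
  · rw [reward_of_go_stay (fun h => hσ' h 0 (by decide)) (fun h => hσ' h 1 (by decide)),
      reward_of_go_stay (fun _ => rfl) (fun _ => rfl)]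

theorem ER_one_goThenStay : G2.ER 1 goThenStay = 1 := by
  rw [ER_eq_reward, reward_of_go_stay (fun _ => rfl) (fun _ => rfl)]
  rfl

def visitsToOne (m : Fin 3) (x : Fin 3 × Bool) : Fin 3 :=
  if x.1 = 1 then (if m = 0 then 1 else 2) else m

def stayTwiceAction (m v : Fin 3) : Bool := if v = 1 then decide (m = 2) else true

def stayTwiceThenGo : Profile (Fin 3) Bool :=
  fun h v => stayTwiceAction (h.foldl visitsToOne 0) v

theorem memBound_stayTwiceThenGo : G2.MemBound stayTwiceThenGo 3 :=
  ⟨3, le_rfl, 0, visitsToOne, stayTwiceAction, fun _ _ => rfl⟩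

theorem exists_first_entry (σ : Profile (Fin 3) Bool) :
    (∀ n, G2.playV σ 0 n = 0) ∨
      ∃ k, (∀ n ≤ k, G2.playV σ 0 n = 0) ∧ G2.playV σ 0 (k + 1) = 1 := by
  classical
  by_cases hstay : ∀ n, G2.playV σ 0 (n + 1) = 0
  · exact .inl fun | 0 => rfl | n + 1 => hstay n
  push Not at hstay
  have hmin : ∀ n ≤ Nat.find hstay, G2.playV σ 0 n = 0
    | 0, _ => rfl
    | n + 1, hn => not_not.1 (Nat.find_min hstay hn)
  refine .inr ⟨Nat.find hstay, hmin, ?_⟩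
  have hleave := Nat.find_spec hstay
  rw [playV_succ, hmin _ le_rfl] at hleave ⊢
  generalize G2.playA σ 0 (Nat.find hstay) = a at hleave ⊢
  cases a
  exacts [absurd rfl hleave, rfl]

theorem play_of_agree_stayTwiceThenGo {σ : Profile (Fin 3) Bool}
    (h1 : ∀ h, σ h 1 = stayTwiceThenGo h 1) {k : ℕ} (hz : ∀ n ≤ k, G2.playV σ 0 n = 0)
    (hk : G2.playV σ 0 (k + 1) = 1) :
    G2.playA σ 0 (k + 1) = false ∧ G2.playV σ 0 (k + 2) = 1 ∧ G2.playA σ 0 (k + 2) = false ∧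
      G2.playV σ 0 (k + 3) = 1 ∧ G2.playA σ 0 (k + 3) = true ∧ G2.playV σ 0 (k + 4) = 2 := by
  set mem := fun n => (G2.histState σ 0 n).1.foldl visitsToOne 0
  have hmem_succ (n : ℕ) : mem (n + 1) = visitsToOne (mem n) (G2.playV σ 0 n, G2.playA σ 0 n) :=
    G2.foldl_histState_succ visitsToOne 0 σ 0 n
  have hact (n : ℕ) (hn : G2.playV σ 0 n = 1) :
      G2.playA σ 0 n = stayTwiceAction (mem n) 1 := by
    rw [playA, hn, h1]; rfl
  have hmem0 : ∀ n ≤ k + 1, mem n = 0 := by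
    intro n hn
    induction n with
    | zero => rfl
    | succ n ih => rw [hmem_succ, hz n (by omega), ih (by omega)]; rfl
  have ha1 : G2.playA σ 0 (k + 1) = false := by rw [hact _ hk, hmem0 _ le_rfl]; rfl
  have hv2 : G2.playV σ 0 (k + 2) = 1 := by rw [playV_succ, hk, ha1]; rfl
  have hm2 : mem (k + 2) = 1 := by rw [hmem_succ, hmem0 _ le_rfl, hk]; rfl
  have ha2 : G2.playA σ 0 (k + 2) = false := by rw [hact _ hv2, hm2]; rfl
  have hv3 : G2.playV σ 0 (k + 3) = 1 := by rw [playV_succ, hv2, ha2]; rfl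
  have hm3 : mem (k + 3) = 2 := by rw [hmem_succ, hm2, hv2]; rfl
  have ha3 : G2.playA σ 0 (k + 3) = true := by rw [hact _ hv3, hm3]; rfl
  have hv4 : G2.playV σ 0 (k + 4) = 2 := by rw [playV_succ, hv3, ha3]; rfl
  exact ⟨ha1, hv2, ha2, hv3, ha3, hv4⟩

theorem reward_of_agree_stayTwiceThenGo {σ : Profile (Fin 3) Bool}
    (h1 : ∀ h, σ h 1 = stayTwiceThenGo h 1) {k : ℕ} (hz : ∀ n ≤ k, G2.playV σ 0 n = 0)
    (hk : G2.playV σ 0 (k + 1) = 1) (p : Fin 3) :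
    G2.reward p σ 0 =
      (1 / 2) ^ (k + 1) * (3 / 2 * G2.rew p 1 false + (G2.rew p 1 true + G2.rew p 2 true) / 4) := by
  obtain ⟨ha1, hv2, ha2, hv3, ha3, hv4⟩ := play_of_agree_stayTwiceThenGo h1 hz hk
  have htail (i : ℕ) : G2.rew p (G2.playV σ 0 (i + 3 + (k + 1)))
      (G2.playA σ 0 (i + 3 + (k + 1))) = G2.rew p 2 true := by
    rw [playV_eq_two_of_le hv4 (by omega)]
    cases G2.playA σ 0 (i + 3 + (k + 1)) <;> rfl
  rw [reward, tsum_mul_pow_of_eq_zero_of_lt (G2.summable_play _ σ 0) (k + 1)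
      fun i hi => by rw [hz i (by omega), rew_zero],
    tsum_mul_pow_of_tail_eq G2.disc_pos.le G2.disc_lt_one 3 htail]
  simp only [sum_range_succ, range_zero, sum_empty, zero_add, show 1 + (k + 1) = k + 2 by omega,
    show 2 + (k + 1) = k + 3 by omega]
  rw [hk, ha1, hv2, ha2, hv3, ha3, disc_eq]
  ring

theorem reward_zero_of_agree_stayTwiceThenGo {σ : Profile (Fin 3) Bool}
    (h1 : ∀ h, σ h 1 = stayTwiceThenGo h 1) : G2.reward 0 σ 0 = 0 := by
  rcases exists_first_entry σ with hz | ⟨k, hz, hk⟩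
  · exact reward_eq_zero_of_playV_eq_zero hz 0
  · rw [reward_of_agree_stayTwiceThenGo h1 hz hk]
    norm_num [G2, show (2 : Fin 3) ≠ 0 by decide]

theorem reward_of_go_agree_stayTwiceThenGo {σ : Profile (Fin 3) Bool} (h0 : ∀ h, σ h 0 = true)
    (h1 : ∀ h, σ h 1 = stayTwiceThenGo h 1) (p : Fin 3) :
    G2.reward p σ 0 =
      (3 / 2 * G2.rew p 1 false + (G2.rew p 1 true + G2.rew p 2 true) / 4) / 2 := by
  have hv1 : G2.playV σ 0 1 = 1 := by rw [playV_succ, playA, playV_zero, h0]; rfl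
  rw [reward_of_agree_stayTwiceThenGo h1 (k := 0) (fun n hn => by rw [Nat.le_zero.1 hn]; rfl) hv1]
  ring

theorem isLeaderSP_stayTwiceThenGo : G2.IsLeaderSP 1 stayTwiceThenGo := by
  refine isLeaderSP_one_of (fun σ' hσ' => ?_) fun σ' hσ' => ?_
  · rw [reward_zero_of_agree_stayTwiceThenGo fun h => hσ' h 1 (by decide),
      reward_zero_of_agree_stayTwiceThenGo fun _ => rfl]
  · rw [reward_of_go_agree_stayTwiceThenGo (fun h => hσ' h 0 (by decide))
        fun h => hσ' h 1 (by decide),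
      reward_of_go_agree_stayTwiceThenGo (σ := stayTwiceThenGo) (fun _ => rfl) fun _ => rfl]

theorem ER_one_stayTwiceThenGo : G2.ER 1 stayTwiceThenGo = 3 / 2 := by
  rw [ER_eq_reward, reward_of_go_agree_stayTwiceThenGo (fun _ => rfl) fun _ => rfl]
  norm_num [G2, show (2 : Fin 3) ≠ 0 by decide]

theorem playV_stayTwiceThenGo (n : ℕ) :
    G2.playV stayTwiceThenGo 0 n = if n = 0 then 0 else if n ≤ 3 then 1 else 2 := by
  have hv1 : G2.playV stayTwiceThenGo 0 1 = 1 := rfl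
  obtain ⟨-, hv2, -, hv3, -, hv4⟩ := play_of_agree_stayTwiceThenGo (fun _ => rfl)
    (k := 0) (fun n hn => by rw [Nat.le_zero.1 hn]; rfl) hv1
  match n with
  | 0 => rfl
  | 1 => exact hv1
  | 2 => exact hv2
  | 3 => exact hv3
  | n + 4 => simpa using playV_eq_two_of_le hv4 (by omega)

end MDSG.G2

open MDSG in
/-- In the game `G₂` (leader = player `1`, i.e. player 2 of the paper):
(i) every memoryless (positional) leader strategy profile gives the leader
expected reward at most `1`, and this bound is attained;
(ii) there is a leader strategy profile with memory bound `3`, in which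
player 1 moves immediately to vertex 2 and the leader loops at vertex 2
exactly twice before moving to vertex 3 (so the visited vertices are
`0, 1, 1, 1, 2, 2, …` in our indexing), whose leader expected reward is `3/2`;
(iii) `3/2` is the maximum of the leader's expected reward over all leader
strategy profiles of `G₂`. -/
theorem bounded_memory_beats_memoryless_in_G2 :
    ((∀ σ : Profile (Fin 3) Bool,
        G2.Positional σ → G2.IsLeaderSP 1 σ → G2.ER 1 σ ≤ 1) ∧
      (∃ σ : Profile (Fin 3) Bool,
        G2.Positional σ ∧ G2.IsLeaderSP 1 σ ∧ G2.ER 1 σ = 1)) ∧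
    (∃ σ : Profile (Fin 3) Bool,
      G2.MemBound σ 3 ∧ G2.IsLeaderSP 1 σ ∧ G2.ER 1 σ = 3 / 2 ∧
      (∀ n : ℕ, G2.playV σ 0 n = if n = 0 then 0 else if n ≤ 3 then 1 else 2)) ∧
    ((∀ σ : Profile (Fin 3) Bool, G2.IsLeaderSP 1 σ → G2.ER 1 σ ≤ 3 / 2) ∧
      (∃ σ : Profile (Fin 3) Bool, G2.IsLeaderSP 1 σ ∧ G2.ER 1 σ = 3 / 2)) :=
  ⟨⟨fun _ => G2.ER_one_le_one_of_positional,
      G2.goThenStay, fun _ _ _ => rfl, G2.isLeaderSP_goThenStay, G2.ER_one_goThenStay⟩,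
    ⟨G2.stayTwiceThenGo, G2.memBound_stayTwiceThenGo, G2.isLeaderSP_stayTwiceThenGo,
      G2.ER_one_stayTwiceThenGo, G2.playV_stayTwiceThenGo⟩,
    fun _ => G2.ER_one_le_of_isLeaderSP,
    G2.stayTwiceThenGo, G2.isLeaderSP_stayTwiceThenGo, G2.ER_one_stayTwiceThenGo⟩
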